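/- Let G be a graph with acyclic-path closure on AP as above. For any biclosed sets X, Y ⊆ AP, the closure of X ∪ Y is co-closed (hence biclosed). -/

import Mathlib

variable {V : Type*}

/-- A list of vertices is an acyclic path in `G`: it is nonempty, consecutive
vertices are adjacent, and vertices at distance `≥ 2` along the path are
non-adjacent. -/
def IsAcyclicPath (G : SimpleGraph V) (l : List V) : Prop :=
  l ≠ [] ∧ l.Chain' G.Adj ∧
    ∀ (i j : ℕ) (hi : i < l.length) (hj : j < l.length),
      i + 2 ≤ j → ¬ G.Adj (l.get ⟨i, hi⟩) (l.get ⟨j, hj⟩)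

/-- The set of acyclic paths of `G`. -/
def AP (G : SimpleGraph V) : Set (List V) := {l | IsAcyclicPath G l}

/-- A set of paths closed under reversal (paths are considered up to reversal). -/
def RevClosed (X : Set (List V)) : Prop := ∀ l ∈ X, l.reverse ∈ X

/-- A set of acyclic paths closed under concatenation: if `p, p' ∈ X` and
`p ∘ p'` is an acyclic path, then `p ∘ p' ∈ X`. -/
def PathClosed (G : SimpleGraph V) (X : Set (List V)) : Prop :=
  ∀ p ∈ X, ∀ q ∈ X, IsAcyclicPath G (p ++ q) → p ++ q ∈ X

/-- A biclosed set of acyclic paths (invariant under reversal): both `X` and its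
complement in `AP` are closed. -/
def PathBiclosed (G : SimpleGraph V) (X : Set (List V)) : Prop :=
  X ⊆ AP G ∧ RevClosed X ∧ PathClosed G X ∧ PathClosed G (AP G \ X)

/-- The closure of a set of acyclic paths: the smallest closed set containing it. -/
def PathClosure (G : SimpleGraph V) (S : Set (List V)) : Set (List V) :=
  ⋂₀ {T | S ⊆ T ∧ PathClosed G T}

/-!
The closure `C` of a union of co-closed sets `Xᵢ` is co-closed because every `r ∈ C` is
*split-prime* in `C`: whenever `r = p ++ q` with `p`, `q` acyclic, `p ∈ C` or `q ∈ C`.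
For `r ∈ Xᵢ` this is co-closedness of `Xᵢ`, and split-primeness passes to an acyclic
concatenation `r₁ ++ r₂`: a splitting point of `r₁ ++ r₂` lies inside `r₁` or inside `r₂`,
where the splitting property of that factor applies, and the piece containing the other
factor is recovered by closedness of `C`.
-/

section

variable {G : SimpleGraph V}

namespace IsAcyclicPath

lemma reverse {l : List V} (h : IsAcyclicPath G l) : IsAcyclicPath G l.reverse := by
  obtain ⟨hne, hchain, hnonadj⟩ := h
  refine ⟨by simpa using hne, ?_, ?_⟩
  · rw [List.Chain', List.isChain_reverse]
    exact hchain.imp fun _ _ hab => hab.symm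
  · intro i j hi hj hij hadj
    simp only [List.length_reverse] at hi hj
    simp only [List.get_eq_getElem, List.getElem_reverse] at hadj
    exact hnonadj (l.length - 1 - j) (l.length - 1 - i) (by omega) (by omega) (by omega)
      (by simpa only [List.get_eq_getElem] using hadj.symm)

lemma of_append_left {u v : List V} (h : IsAcyclicPath G (u ++ v)) (hu : u ≠ []) :
    IsAcyclicPath G u := by
  obtain ⟨-, hchain, hnonadj⟩ := h
  refine ⟨hu, (List.isChain_append.mp hchain).1, fun i j hi hj hij hadj => ?_⟩
  refine hnonadj i j (by simp only [List.length_append]; omega)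
    (by simp only [List.length_append]; omega) hij ?_
  simpa only [List.get_eq_getElem, List.getElem_append_left hi, List.getElem_append_left hj]
    using hadj

lemma of_append_right {u v : List V} (h : IsAcyclicPath G (u ++ v)) (hv : v ≠ []) :
    IsAcyclicPath G v := by
  obtain ⟨-, hchain, hnonadj⟩ := h
  refine ⟨hv, (List.isChain_append.mp hchain).2.1, fun i j hi hj hij hadj => ?_⟩
  refine hnonadj (u.length + i) (u.length + j) (by simp only [List.length_append]; omega)
    (by simp only [List.length_append]; omega) (by omega) ?_
  simpa [List.getElem_append_right] using hadj

end IsAcyclicPath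

lemma pathClosed_AP : PathClosed G (AP G) := fun _ _ _ _ hpq => hpq

lemma subset_pathClosure (S : Set (List V)) : S ⊆ PathClosure G S :=
  fun _ hl _ hT => hT.1 hl

lemma pathClosed_pathClosure (S : Set (List V)) : PathClosed G (PathClosure G S) :=
  fun _ hp _ hq hpq T hT => hT.2 _ (hp T hT) _ (hq T hT) hpq

lemma pathClosure_subset {S T : Set (List V)} (hST : S ⊆ T) (hT : PathClosed G T) :
    PathClosure G S ⊆ T :=
  Set.sInter_subset_of_mem ⟨hST, hT⟩

lemma pathClosure_subset_AP {S : Set (List V)} (hS : S ⊆ AP G) : PathClosure G S ⊆ AP G :=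
  pathClosure_subset hS pathClosed_AP

lemma RevClosed.union {X Y : Set (List V)} (hX : RevClosed X) (hY : RevClosed Y) :
    RevClosed (X ∪ Y) :=
  fun l hl => hl.imp (hX l) (hY l)

lemma RevClosed.pathClosure {S : Set (List V)} (hS : RevClosed S) :
    RevClosed (PathClosure G S) := by
  have hclosed : PathClosed G {l | l.reverse ∈ PathClosure G S} := by
    intro p hp q hq hpq
    rw [Set.mem_ofPred_eq, List.reverse_append]
    exact pathClosed_pathClosure S _ hq _ hp (by simpa using hpq.reverse)
  exact pathClosure_subset (fun l hl => subset_pathClosure S (hS l hl)) hclosed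

def SplitPrime (G : SimpleGraph V) (C : Set (List V)) (r : List V) : Prop :=
  ∀ p q, p ++ q = r → IsAcyclicPath G p → IsAcyclicPath G q → IsAcyclicPath G r →
    p ∈ C ∨ q ∈ C

lemma splitPrime_of_pathClosed_diff {X C : Set (List V)} (hX : PathClosed G (AP G \ X))
    (hXC : X ⊆ C) {r : List V} (hr : r ∈ X) : SplitPrime G C r := by
  rintro p q rfl hp hq hpq
  by_contra! hpqC
  exact (hX p ⟨hp, fun h => hpqC.1 (hXC h)⟩ q ⟨hq, fun h => hpqC.2 (hXC h)⟩ hpq).2 hr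

lemma pathClosed_diff_of_splitPrime {C : Set (List V)} (hC : ∀ r ∈ C, SplitPrime G C r) :
    PathClosed G (AP G \ C) := by
  rintro p ⟨hp, hpC⟩ q ⟨hq, hqC⟩ hpq
  refine ⟨hpq, fun hr => ?_⟩
  rcases hC _ hr p q rfl hp hq hpq with h | h
  exacts [hpC h, hqC h]

lemma SplitPrime.append {C : Set (List V)} (hC : PathClosed G C) {r₁ r₂ : List V}
    (hr₁C : r₁ ∈ C) (hr₂C : r₂ ∈ C) (hr₁ : SplitPrime G C r₁) (hr₂ : SplitPrime G C r₂)
    (hr : IsAcyclicPath G (r₁ ++ r₂)) : SplitPrime G C (r₁ ++ r₂) := by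
  rintro p q hpq hp hq -
  rcases List.append_eq_append_iff.mp hpq with ⟨m, rfl, rfl⟩ | ⟨m, rfl, rfl⟩
  · rcases eq_or_ne m [] with rfl | hm
    · exact .inl (by simpa using hr₁C)
    have hm_acyclic := hq.of_append_left hm
    rcases hr₁ p m rfl hp hm_acyclic (hr.of_append_left (by simp [hm])) with h | h
    exacts [.inl h, .inr (hC _ h _ hr₂C hq)]
  · rcases eq_or_ne m [] with rfl | hm
    · exact .inr (by simpa using hr₂C)
    have hm_acyclic := hp.of_append_right hm
    rcases hr₂ m q rfl hm_acyclic hq (hr.of_append_right (by simp [hm])) with h | h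
    exacts [.inl (hC _ hr₁C _ h hp), .inr h]

theorem pathClosed_diff_pathClosure_sUnion {𝒳 : Set (Set (List V))}
    (h𝒳 : ∀ X ∈ 𝒳, PathClosed G (AP G \ X)) :
    PathClosed G (AP G \ PathClosure G (⋃₀ 𝒳)) := by
  set C := PathClosure G (⋃₀ 𝒳)
  have hbase : ⋃₀ 𝒳 ⊆ {r | r ∈ C ∧ SplitPrime G C r} := by
    rintro r ⟨X, hX, hr⟩
    refine ⟨subset_pathClosure _ ⟨X, hX, hr⟩, splitPrime_of_pathClosed_diff (h𝒳 X hX) ?_ hr⟩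
    exact (Set.subset_sUnion_of_mem hX).trans (subset_pathClosure _)
  have hclosed : PathClosed G {r | r ∈ C ∧ SplitPrime G C r} :=
    fun r₁ hr₁ r₂ hr₂ hr => ⟨pathClosed_pathClosure _ _ hr₁.1 _ hr₂.1 hr,
      hr₁.2.append (pathClosed_pathClosure _) hr₁.1 hr₂.1 hr₂.2 hr⟩
  exact pathClosed_diff_of_splitPrime fun r hr => (pathClosure_subset hbase hclosed hr).2

end

theorem stmt11_general (G : SimpleGraph V)
    (X Y : Set (List V)) (hX : PathBiclosed G X) (hY : PathBiclosed G Y) :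
    PathClosed G (AP G \ PathClosure G (X ∪ Y)) ∧
    PathBiclosed G (PathClosure G (X ∪ Y)) := by
  have hco : PathClosed G (AP G \ PathClosure G (X ∪ Y)) := by
    rw [← Set.sUnion_pair]
    refine pathClosed_diff_pathClosure_sUnion ?_
    rintro Z (rfl | rfl)
    exacts [hX.2.2.2, hY.2.2.2]
  exact ⟨hco, pathClosure_subset_AP (Set.union_subset hX.1 hY.1),
    (hX.2.1.union hY.2.1).pathClosure, pathClosed_pathClosure _, hco⟩

/-- For biclosed sets `X, Y` of acyclic paths, the closure of
`X ∪ Y` is co-closed, hence biclosed. -/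
theorem stmt11 [Fintype V] (G : SimpleGraph V)
    (X Y : Set (List V)) (hX : PathBiclosed G X) (hY : PathBiclosed G Y) :
    PathClosed G (AP G \ PathClosure G (X ∪ Y)) ∧
    PathBiclosed G (PathClosure G (X ∪ Y)) :=
  stmt11_general G X Y hX hY
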